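/- (Domination, viscosity sense.) Let n ≥ 2, 2 ≤ p ≤ ∞ and Ω ⊆ ℝⁿ open. If u : Ω → (−∞,∞] satisfies D_p u ≤ 0 in the viscosity sense in Ω, then u is p-superharmonic in Ω, i.e. u is a viscosity supersolution of Δ_p u = 0. -/

import Mathlib

open scoped ENNReal
open Filter Matrix

noncomputable section

/-- Hessian matrix of `u` at `x` (entries are second partial derivatives). -/
def hess {n : ℕ} (u : EuclideanSpace ℝ (Fin n) → ℝ) (x : EuclideanSpace ℝ (Fin n)) :
    Matrix (Fin n) (Fin n) ℝ :=
  Matrix.of fun i j =>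
    iteratedFDeriv ℝ 2 u x ![EuclideanSpace.single i 1, EuclideanSpace.single j 1]

/-- Laplacian: trace of the Hessian. -/
def lapl {n : ℕ} (u : EuclideanSpace ℝ (Fin n) → ℝ) (x : EuclideanSpace ℝ (Fin n)) : ℝ :=
  ∑ i, hess u x i i

/-- Quadratic form `zᵀ A z`. -/
def quadForm {n : ℕ} (A : Matrix (Fin n) (Fin n) ℝ) (z : EuclideanSpace ℝ (Fin n)) : ℝ :=
  ∑ i, ∑ j, z i * A i j * z j

/-- Largest eigenvalue of a (symmetric) matrix: the max of `zᵀAz` over unit vectors `z`. -/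
def lamMax {n : ℕ} (A : Matrix (Fin n) (Fin n) ℝ) : ℝ :=
  sSup {r : ℝ | ∃ z : EuclideanSpace ℝ (Fin n), ‖z‖ = 1 ∧ r = quadForm A z}

open Classical in
/-- Dominative p-Laplacian `D_p u(x)`, for `2 ≤ p ≤ ∞`. -/
def Dop {n : ℕ} (p : ℝ≥0∞) (u : EuclideanSpace ℝ (Fin n) → ℝ)
    (x : EuclideanSpace ℝ (Fin n)) : ℝ :=
  if p = ⊤ then lamMax (hess u x)
  else (p.toReal - 2) * lamMax (hess u x) + lapl u x

open Classical in
/-- p-Laplacian `Δ_p u(x)` (the `∞`-Laplacian `∇u H u ∇uᵀ` for `p = ∞`).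
For finite `p`, `Δ_p u = |∇u|^{p-2} Δu + (p-2)|∇u|^{p-4} ∇u Hu ∇uᵀ` with real powers,
which is automatically `0` at critical points when `p > 2` and `Δu` when `p = 2`. -/
def DeltaOp {n : ℕ} (p : ℝ≥0∞) (u : EuclideanSpace ℝ (Fin n) → ℝ)
    (x : EuclideanSpace ℝ (Fin n)) : ℝ :=
  if p = ⊤ then quadForm (hess u x) (gradient u x)
  else ‖gradient u x‖ ^ (p.toReal - 2) * lapl u x
    + (p.toReal - 2) * ‖gradient u x‖ ^ (p.toReal - 4) * quadForm (hess u x) (gradient u x)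

open Classical in
/-- Radial profile `W_{k,p}` of the fundamental solution of the p-Laplace equation in ℝᵏ. -/
def Wfun (p : ℝ≥0∞) (k : ℕ) (r : ℝ) : ℝ :=
  if p = ⊤ ∨ k = 1 then -r
  else if p.toReal = k then -Real.log r
  else -((p.toReal - 1) / (p.toReal - k)) * r ^ ((p.toReal - k) / (p.toReal - 1))

/-- Euclidean norm of a plain vector in `Fin k → ℝ`. -/
def enorm' {k : ℕ} (v : Fin k → ℝ) : ℝ := Real.sqrt (∑ i, v i ^ 2)

/-- `u : Ω → (-∞,∞]` is a viscosity supersolution of `G(∇u, Hu) = 0` on `Ω`: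
lower semicontinuous, `> -∞`, finite on a dense subset of `Ω`, and every `C²`
test function `φ` touching `u` from below at `x₀ ∈ Ω` satisfies `G φ x₀ ≤ 0`. -/
def ViscSupersol {n : ℕ}
    (G : (EuclideanSpace ℝ (Fin n) → ℝ) → EuclideanSpace ℝ (Fin n) → ℝ)
    (Ω : Set (EuclideanSpace ℝ (Fin n))) (u : EuclideanSpace ℝ (Fin n) → EReal) : Prop :=
  LowerSemicontinuousOn u Ω ∧
  (∀ x ∈ Ω, u x ≠ ⊥) ∧
  Ω ⊆ closure {x | x ∈ Ω ∧ u x ≠ ⊤} ∧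
  ∀ x₀ ∈ Ω, ∀ φ : EuclideanSpace ℝ (Fin n) → ℝ,
    ContDiffAt ℝ 2 φ x₀ → (φ x₀ : EReal) = u x₀ →
    (∀ᶠ x in nhdsWithin x₀ Ω, (φ x : EReal) ≤ u x) → G φ x₀ ≤ 0

open Classical in
/-- EReal-valued fundamental solution `w_{m,p}` on ℝᵐ, equal to `⊤` at the pole when `p ≤ m`,
`p ≠ ∞`. -/
def wEReal (p : ℝ≥0∞) (m : ℕ) (x : EuclideanSpace ℝ (Fin m)) : EReal :=
  if x = 0 ∧ p ≤ (m : ℝ≥0∞) ∧ p ≠ ⊤ then (⊤ : EReal)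
  else ((Wfun p m ‖x‖ : ℝ) : EReal)

end

/-!
Along the unit gradient direction the Hessian quadratic form of a test function is at most
its largest eigenvalue, so pointwise `Δ_p φ = |∇φ|^{p-2} (Δφ + (p-2) ⟨H ê, ê⟩) ≤ |∇φ|^{p-2} D_p φ`
(and `Δ_∞ φ ≤ |∇φ|² D_∞ φ`). Hence `D_p φ(x₀) ≤ 0` forces `Δ_p φ(x₀) ≤ 0` for every test
function touching `u` from below.
-/

section

variable {n : ℕ}

theorem quadForm_smul (A : Matrix (Fin n) (Fin n) ℝ) (c : ℝ) (z : EuclideanSpace ℝ (Fin n)) :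
    quadForm A (c • z) = c ^ 2 * quadForm A z := by
  simp only [quadForm, Finset.mul_sum, PiLp.smul_apply, smul_eq_mul]
  exact Finset.sum_congr rfl fun _ _ => Finset.sum_congr rfl fun _ _ => by ring

theorem continuous_quadForm (A : Matrix (Fin n) (Fin n) ℝ) : Continuous (quadForm A) := by
  unfold quadForm
  fun_prop

theorem bddAbove_quadForm_unit (A : Matrix (Fin n) (Fin n) ℝ) :
    BddAbove {r : ℝ | ∃ z : EuclideanSpace ℝ (Fin n), ‖z‖ = 1 ∧ r = quadForm A z} := by
  refine ((isCompact_sphere (0 : EuclideanSpace ℝ (Fin n)) 1).bddAbove_image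
    (continuous_quadForm A).continuousOn).mono ?_
  rintro _ ⟨z, hz, rfl⟩
  exact ⟨z, by simpa using hz, rfl⟩

theorem quadForm_le_lamMax (A : Matrix (Fin n) (Fin n) ℝ) {z : EuclideanSpace ℝ (Fin n)}
    (hz : ‖z‖ = 1) : quadForm A z ≤ lamMax A :=
  le_csSup (bddAbove_quadForm_unit A) ⟨z, hz, rfl⟩

theorem quadForm_le_sq_norm_mul_lamMax (A : Matrix (Fin n) (Fin n) ℝ)
    (z : EuclideanSpace ℝ (Fin n)) : quadForm A z ≤ ‖z‖ ^ 2 * lamMax A := by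
  rcases eq_or_ne z 0 with rfl | hz
  · simp [quadForm]
  have hz' : ‖z‖ ≠ 0 := norm_ne_zero_iff.mpr hz
  have hunit : ‖‖z‖⁻¹ • z‖ = 1 := by
    rw [norm_smul, norm_inv, norm_norm, inv_mul_cancel₀ hz']
  calc quadForm A z = ‖z‖ ^ 2 * quadForm A (‖z‖⁻¹ • z) := by
        rw [quadForm_smul, ← mul_assoc, ← mul_pow, mul_inv_cancel₀ hz', one_pow, one_mul]
    _ ≤ ‖z‖ ^ 2 * lamMax A := by gcongr; exact quadForm_le_lamMax A hunit

theorem DeltaOp_top_le (u : EuclideanSpace ℝ (Fin n) → ℝ) (x : EuclideanSpace ℝ (Fin n)) :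
    DeltaOp ⊤ u x ≤ ‖gradient u x‖ ^ 2 * Dop ⊤ u x := by
  simpa only [DeltaOp, Dop, if_true] using quadForm_le_sq_norm_mul_lamMax _ _

theorem DeltaOp_le_rpow_mul_Dop {p : ℝ≥0∞} (hp : p ≠ ⊤) (hp2 : 2 ≤ p.toReal)
    (u : EuclideanSpace ℝ (Fin n) → ℝ) (x : EuclideanSpace ℝ (Fin n)) :
    DeltaOp p u x ≤ ‖gradient u x‖ ^ (p.toReal - 2) * Dop p u x := by
  simp only [DeltaOp, Dop, hp, if_false]
  set t := p.toReal
  set g := gradient u x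
  set H := hess u x
  rcases eq_or_ne g 0 with hg | hg
  · rcases hp2.eq_or_lt with ht | ht
    · simp [← ht]
    · simp [hg, quadForm, Real.zero_rpow (by linarith : t - 2 ≠ 0)]
  have hpow : ‖g‖ ^ (t - 4) * ‖g‖ ^ 2 = ‖g‖ ^ (t - 2) := by
    rw [← Real.rpow_natCast, ← Real.rpow_add (norm_pos_iff.mpr hg)]
    ring_nf
  have hq : (t - 2) * quadForm H g ≤ (t - 2) * (‖g‖ ^ 2 * lamMax H) :=
    mul_le_mul_of_nonneg_left (quadForm_le_sq_norm_mul_lamMax H g) (by linarith)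
  calc ‖g‖ ^ (t - 2) * lapl u x + (t - 2) * ‖g‖ ^ (t - 4) * quadForm H g
      = ‖g‖ ^ (t - 2) * lapl u x + ‖g‖ ^ (t - 4) * ((t - 2) * quadForm H g) := by ring
    _ ≤ ‖g‖ ^ (t - 2) * lapl u x + ‖g‖ ^ (t - 4) * ((t - 2) * (‖g‖ ^ 2 * lamMax H)) := by
        gcongr
    _ = ‖g‖ ^ (t - 2) * ((t - 2) * lamMax H + lapl u x) := by rw [← hpow]; ring

theorem exists_DeltaOp_le_nonneg_mul_Dop {p : ℝ≥0∞} (hp : 2 ≤ p)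
    (u : EuclideanSpace ℝ (Fin n) → ℝ) (x : EuclideanSpace ℝ (Fin n)) :
    ∃ c, 0 ≤ c ∧ DeltaOp p u x ≤ c * Dop p u x := by
  rcases eq_or_ne p ⊤ with rfl | hp_top
  · exact ⟨_, by positivity, DeltaOp_top_le u x⟩
  · have hp2 : 2 ≤ p.toReal := by
      simpa using (ENNReal.toReal_le_toReal ENNReal.ofNat_ne_top hp_top).mpr hp
    exact ⟨_, by positivity, DeltaOp_le_rpow_mul_Dop hp_top hp2 u x⟩

theorem ViscSupersol.mono
    {G G' : (EuclideanSpace ℝ (Fin n) → ℝ) → EuclideanSpace ℝ (Fin n) → ℝ}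
    (hG : ∀ φ x, G φ x ≤ 0 → G' φ x ≤ 0) {Ω : Set (EuclideanSpace ℝ (Fin n))}
    {u : EuclideanSpace ℝ (Fin n) → EReal} (h : ViscSupersol G Ω u) :
    ViscSupersol G' Ω u :=
  let ⟨hlsc, hbot, hdense, htest⟩ := h
  ⟨hlsc, hbot, hdense, fun x₀ hx₀ φ hφ hφx hφle => hG φ x₀ (htest x₀ hx₀ φ hφ hφx hφle)⟩

end

theorem stmt_13_general {n : ℕ} (p : ℝ≥0∞) (hp : 2 ≤ p)
    (Ω : Set (EuclideanSpace ℝ (Fin n)))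
    (u : EuclideanSpace ℝ (Fin n) → EReal)
    (h : ViscSupersol (Dop p) Ω u) :
    ViscSupersol (DeltaOp p) Ω u := by
  refine h.mono fun φ x hD => ?_
  obtain ⟨c, hc, hle⟩ := exists_DeltaOp_le_nonneg_mul_Dop hp φ x
  exact hle.trans (mul_nonpos_of_nonneg_of_nonpos hc hD)

/-- Domination, viscosity sense. -/
theorem stmt_13 {n : ℕ} (hn : 2 ≤ n) (p : ℝ≥0∞) (hp : 2 ≤ p)
    (Ω : Set (EuclideanSpace ℝ (Fin n))) (hΩ : IsOpen Ω)
    (u : EuclideanSpace ℝ (Fin n) → EReal)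
    (h : ViscSupersol (Dop p) Ω u) :
    ViscSupersol (DeltaOp p) Ω u :=
  stmt_13_general p hp Ω u h
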